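/- Suppose y* ∈ ℝ⁴ and η ∈ ℝ satisfy the constrained critical point equation ∇H(y*) = η·∇H0(y*), where H = H0 + H2 + H4 is the truncated normal form Hamiltonian. Then the curve γ(t) = exp(η·t·J·S)·y* solves the Hamiltonian system γ′(t) = J·∇H(γ(t)) for all t ∈ ℝ; moreover, if η ≠ 0 then γ is periodic with period π/(|η|·Δ). (Chow–Kim: constrained critical points of the truncated normal form give exact relative periodic orbits.) -/

import Mathlib

/-- The gradient (vector of partial derivatives) of a function on ℝ⁴. -/
noncomputable def grad4 (f : (Fin 4 → ℝ) → ℝ) (y : Fin 4 → ℝ) : Fin 4 → ℝ :=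
  fun i => fderiv ℝ f y (Pi.single i 1)

/-- The standard symplectic matrix `J` in coordinates `(x₁, x₃, y₁, y₃)`. -/
def Jmat : Matrix (Fin 4) (Fin 4) ℝ :=
  !![0, 0, 1, 0; 0, 0, 0, 1; -1, 0, 0, 0; 0, -1, 0, 0]

/-- `S = diag(−2Δ, 2Δ, −2Δ, 2Δ)`, so that `∇H₀(y) = S y`. -/
def Smat (Δ : ℝ) : Matrix (Fin 4) (Fin 4) ℝ :=
  Matrix.diagonal ![-2 * Δ, 2 * Δ, -2 * Δ, 2 * Δ]

/-- `H₀ = −Δ|z₁|² + Δ|z₃|²`, with `z₁ = y₀ + i y₂`, `z₃ = y₁ + i y₃`. -/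
noncomputable def H0fun (Δ : ℝ) (y : Fin 4 → ℝ) : ℝ :=
  -Δ * ((y 0) ^ 2 + (y 2) ^ 2) + Δ * ((y 1) ^ 2 + (y 3) ^ 2)

/-- `H₂ = ε(|z₁|²+|z₃|²) + 2AN(z₁z₃ + conj z₁ conj z₃)`. -/
noncomputable def H2fun (ε A N : ℝ) (y : Fin 4 → ℝ) : ℝ :=
  ε * ((y 0) ^ 2 + (y 2) ^ 2 + (y 1) ^ 2 + (y 3) ^ 2)
    + 2 * A * N * (2 * (y 0 * y 1 - y 2 * y 3))

/-- `H₄ = A[(1/2)|z₁|⁴ − 2|z₁|²|z₃|² + (1/2)|z₃|⁴ − 2(|z₁|²+|z₃|²)(z₁z₃ + conj z₁ conj z₃)]`. -/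
noncomputable def H4fun (A : ℝ) (y : Fin 4 → ℝ) : ℝ :=
  A * ((1 / 2) * ((y 0) ^ 2 + (y 2) ^ 2) ^ 2
    - 2 * ((y 0) ^ 2 + (y 2) ^ 2) * ((y 1) ^ 2 + (y 3) ^ 2)
    + (1 / 2) * ((y 1) ^ 2 + (y 3) ^ 2) ^ 2
    - 2 * (((y 0) ^ 2 + (y 2) ^ 2) + ((y 1) ^ 2 + (y 3) ^ 2))
        * (2 * (y 0 * y 1 - y 2 * y 3)))

/-!
The flow of `H₀` is the rotation `R θ = exp (θ • J S) = cos (2Δθ) • 1 + (sin (2Δθ) / 2Δ) • J S`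
(because `(J S)² = -(2Δ)² • 1`), which acts by `z₁ ↦ e^{2iΔθ} z₁`, `z₃ ↦ e^{-2iΔθ} z₃`. It preserves
`|z₁|²`, `|z₃|²` and `z₁ z₃`, hence `H`; since `R θ` is orthogonal, `∇H (R θ y) = R θ ∇H y`. As `R θ`
commutes with `J S` and with `J`, for `γ t = R (η t) y*`
`γ' = R (η t) (η J S y*) = R (η t) (J (η ∇H₀ y*)) = R (η t) (J ∇H y*) = J ∇H (γ t)`.
Finally `R` has period `π / Δ`.
-/

open NormedSpace Matrix

section ExpOfSquareNegScalar

variable {𝔸 : Type*} [NormedRing 𝔸] [NormedAlgebra ℝ 𝔸] [Algebra ℚ 𝔸]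

-- `M / ω` squares to `-1`, so `i ↦ M / ω` embeds `ℂ`,
-- and `exp (θ • M)` is the image of `exp (i ω θ)`.
noncomputable def complexToAlgebraOfMulSelf {M : 𝔸} {ω : ℝ} (hM : M * M = -(ω ^ 2) • (1 : 𝔸))
    (hω : ω ≠ 0) : ℂ →ₐ[ℝ] 𝔸 where
  toFun z := z.re • (1 : 𝔸) + (z.im / ω) • M
  map_one' := by simp
  map_mul' z w := by
    simp only [Complex.mul_re, Complex.mul_im, add_mul, mul_add, smul_mul_smul, one_mul, mul_one,
      hM, smul_smul]
    match_scalars <;> field_simp <;> ring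
  map_zero' := by simp
  map_add' z w := by
    simp only [Complex.add_re, Complex.add_im]
    match_scalars <;> ring
  commutes' r := by simp [Algebra.algebraMap_eq_smul_one]

theorem exp_smul_eq_cos_add_sin {M : 𝔸} {ω : ℝ} (hM : M * M = -(ω ^ 2) • (1 : 𝔸))
    (hω : ω ≠ 0) (θ : ℝ) :
    exp (θ • M) = Real.cos (ω * θ) • (1 : 𝔸) + (Real.sin (ω * θ) / ω) • M := by
  set φ := complexToAlgebraOfMulSelf hM hω
  have hφ : Continuous φ := by
    show Continuous fun z : ℂ => z.re • (1 : 𝔸) + (z.im / ω) • M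
    fun_prop
  have hθ : θ • M = φ (((ω * θ : ℝ) : ℂ) * Complex.I) := by
    show _ = _ • (1 : 𝔸) + _ • M
    simp [hω]
  rw [hθ, ← map_exp φ hφ, ← Complex.exp_eq_exp_ℂ, Complex.exp_mul_I, ← Complex.ofReal_cos,
    ← Complex.ofReal_sin]
  show _ • (1 : 𝔸) + _ • M = _
  simp only [Complex.add_re, Complex.add_im, Complex.mul_re, Complex.mul_im, Complex.ofReal_re,
    Complex.ofReal_im, Complex.I_re, Complex.I_im]
  match_scalars <;> ring

theorem periodic_exp_smul_of_mul_self {M : 𝔸} {ω : ℝ} (hM : M * M = -(ω ^ 2) • (1 : 𝔸))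
    (hω : ω ≠ 0) : Function.Periodic (fun θ : ℝ => exp (θ • M)) (2 * Real.pi / ω) := fun θ => by
  simp only [exp_smul_eq_cos_add_sin hM hω, mul_add, mul_div_cancel₀ _ hω, Real.cos_add_two_pi,
    Real.sin_add_two_pi]

end ExpOfSquareNegScalar

theorem Matrix.hasDerivAt_exp_smul_mulVec {n : Type*} [Fintype n] [DecidableEq n]
    (M : Matrix n n ℝ) (y : n → ℝ) (t : ℝ) :
    HasDerivAt (fun s : ℝ => exp (s • M) *ᵥ y) (M *ᵥ (exp (t • M) *ᵥ y)) t := by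
  open scoped Norms.Operator in
  have hexp := hasDerivAt_exp_smul_const' (𝕂 := ℝ) M t
  let L : Matrix n n ℝ →L[ℝ] n → ℝ :=
    LinearMap.toContinuousLinearMap ((LinearMap.applyₗ y).comp Matrix.toLin'.toLinearMap)
  refine (L.hasFDerivAt.comp_hasDerivAt t hexp).congr_deriv ?_
  rw [mulVec_mulVec]
  rfl

theorem Matrix.exp_mul_transpose_of_transpose_eq_neg {n : Type*} [Fintype n] [DecidableEq n]
    {M : Matrix n n ℝ} (hM : Mᵀ = -M) : exp M * (exp M)ᵀ = 1 := by
  rw [← Matrix.exp_transpose, hM,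
    ← Matrix.exp_add_of_commute _ _ (Commute.neg_right (Commute.refl M)), add_neg_cancel, exp_zero]

section Gradient

variable {f : (Fin 4 → ℝ) → ℝ}

theorem fderiv_apply_eq_dotProduct_grad4 (y v : Fin 4 → ℝ) :
    fderiv ℝ f y v = v ⬝ᵥ grad4 f y := by
  conv_lhs => rw [← Finset.univ_sum_single v]
  simp only [map_sum, dotProduct, grad4]
  refine Finset.sum_congr rfl fun i _ => ?_
  rw [← smul_eq_mul, ← map_smul, ← Pi.single_smul', smul_eq_mul, mul_one]

theorem grad4_comp_mulVec {R : Matrix (Fin 4) (Fin 4) ℝ} {y : Fin 4 → ℝ}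
    (hf : DifferentiableAt ℝ f (R *ᵥ y)) :
    grad4 (fun x => f (R *ᵥ x)) y = Rᵀ *ᵥ grad4 f (R *ᵥ y) := by
  let L : (Fin 4 → ℝ) →L[ℝ] Fin 4 → ℝ := LinearMap.toContinuousLinearMap (Matrix.mulVecLin R)
  have hfL := (hf.hasFDerivAt.comp y L.hasFDerivAt).fderiv
  funext i
  simp only [grad4, Function.comp_def] at hfL ⊢
  rw [hfL]
  simp [L, fderiv_apply_eq_dotProduct_grad4, mulVec, dotProduct]

theorem grad4_mulVec_of_comp_eq {R : Matrix (Fin 4) (Fin 4) ℝ} (hf : Differentiable ℝ f)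
    (hfR : ∀ x, f (R *ᵥ x) = f x) (hR : R * Rᵀ = 1) (y : Fin 4 → ℝ) :
    grad4 f (R *ᵥ y) = R *ᵥ grad4 f y := by
  have h := grad4_comp_mulVec (hf (R *ᵥ y))
  simp only [hfR] at h
  rw [h, mulVec_mulVec, hR, one_mulVec]

theorem grad4_sum_mul_sq (d y : Fin 4 → ℝ) :
    grad4 (fun x => ∑ i, d i * x i ^ 2) y = diagonal (fun i => 2 * d i) *ᵥ y := by
  have h := HasFDerivAt.fun_sum (u := Finset.univ) fun i _ =>
    ((hasFDerivAt_apply (𝕜 := ℝ) i y).pow 2).const_mul (d i)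
  funext i
  simp only [grad4]
  rw [h.fderiv]
  simp only [Nat.add_one_sub_one, pow_one, nsmul_eq_mul, Nat.cast_ofNat, _root_.sum_apply,
    _root_.smul_apply, ContinuousLinearMap.proj_apply, Pi.single_apply, smul_eq_mul, mul_ite,
    mul_one, mul_zero, Finset.sum_ite_eq', Finset.mem_univ, ↓reduceIte, mulVec_diagonal]
  ring

end Gradient

section SymplecticRotation

theorem Jmat_transpose : Jmatᵀ = -Jmat := by
  ext i j
  fin_cases i <;> fin_cases j <;> simp [Jmat]

theorem Jmat_mul_self : Jmat * Jmat = -1 := by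
  ext i j
  fin_cases i <;> fin_cases j <;> simp [Jmat, mul_apply, Fin.sum_univ_four, one_apply]

theorem commute_Jmat_Smat (Δ : ℝ) : Commute Jmat (Smat Δ) := by
  ext i j
  fin_cases i <;> fin_cases j <;> simp [Jmat, Smat, mul_apply, Fin.sum_univ_four]

theorem Smat_mul_self (Δ : ℝ) :
    Smat Δ * Smat Δ = (2 * Δ) ^ 2 • (1 : Matrix (Fin 4) (Fin 4) ℝ) := by
  ext i j
  fin_cases i <;> fin_cases j <;> simp [Smat, one_apply] <;> ring

theorem Jmat_mul_Smat_transpose (Δ : ℝ) : (Jmat * Smat Δ)ᵀ = -(Jmat * Smat Δ) := by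
  rw [transpose_mul, Smat, diagonal_transpose, ← Smat, Jmat_transpose, mul_neg,
    (commute_Jmat_Smat Δ).eq]

theorem Jmat_mul_Smat_mul_self (Δ : ℝ) :
    Jmat * Smat Δ * (Jmat * Smat Δ) = -((2 * Δ) ^ 2) • (1 : Matrix (Fin 4) (Fin 4) ℝ) := by
  rw [mul_assoc, ← mul_assoc (Smat Δ), ← (commute_Jmat_Smat Δ).eq, mul_assoc, ← mul_assoc,
    Jmat_mul_self, Smat_mul_self, neg_one_mul, neg_smul]

theorem Jmat_mul_Smat_mulVec (Δ : ℝ) (y : Fin 4 → ℝ) :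
    (Jmat * Smat Δ) *ᵥ y = ![-(2 * Δ * y 2), 2 * Δ * y 3, 2 * Δ * y 0, -(2 * Δ * y 1)] := by
  funext i
  fin_cases i <;> simp [Jmat, Smat, mulVec, dotProduct, Fin.sum_univ_four]

variable {Δ : ℝ}

theorem exp_smul_Jmat_mul_Smat_mulVec (hΔ : Δ ≠ 0) (θ : ℝ) (y : Fin 4 → ℝ) :
    exp (θ • (Jmat * Smat Δ)) *ᵥ y =
      ![Real.cos (2 * Δ * θ) * y 0 - Real.sin (2 * Δ * θ) * y 2,
        Real.cos (2 * Δ * θ) * y 1 + Real.sin (2 * Δ * θ) * y 3,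
        Real.sin (2 * Δ * θ) * y 0 + Real.cos (2 * Δ * θ) * y 2,
        Real.cos (2 * Δ * θ) * y 3 - Real.sin (2 * Δ * θ) * y 1] := by
  open scoped Norms.Operator in
  rw [show exp (θ • (Jmat * Smat Δ)) = _ from
    exp_smul_eq_cos_add_sin (Jmat_mul_Smat_mul_self Δ) (mul_ne_zero two_ne_zero hΔ) θ,
    add_mulVec, smul_mulVec, smul_mulVec, one_mulVec, Jmat_mul_Smat_mulVec]
  funext i
  fin_cases i <;>
    simp only [Fin.isValue, smul_cons, smul_eq_mul, smul_empty, Pi.add_apply, Pi.smul_apply,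
      Fin.zero_eta, Fin.mk_one, Fin.reduceFinMk, cons_val_zero, cons_val_one, cons_val] <;>
    field_simp <;> ring

theorem periodic_exp_smul_Jmat_mul_Smat (hΔ : Δ ≠ 0) :
    Function.Periodic (fun θ : ℝ => exp (θ • (Jmat * Smat Δ))) (Real.pi / Δ) := by
  open scoped Norms.Operator in
  have h := periodic_exp_smul_of_mul_self (Jmat_mul_Smat_mul_self Δ) (mul_ne_zero two_ne_zero hΔ)
  rwa [mul_div_mul_left _ _ two_ne_zero] at h

theorem periodic_exp_mul_smul_Jmat_mul_Smat_mulVec (hΔ : 0 < Δ) {η : ℝ} (hη : η ≠ 0)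
    (y : Fin 4 → ℝ) :
    Function.Periodic (fun s : ℝ => exp ((η * s) • (Jmat * Smat Δ)) *ᵥ y)
      (Real.pi / (|η| * Δ)) := by
  have h := ((periodic_exp_smul_Jmat_mul_Smat hΔ.ne').const_mul η).comp (· *ᵥ y)
  have hT : Real.pi / (|η| * Δ) = |η⁻¹ * (Real.pi / Δ)| := by
    rw [abs_mul, abs_inv, abs_of_pos (div_pos Real.pi_pos hΔ)]
    field_simp
  rcases abs_choice (η⁻¹ * (Real.pi / Δ)) with habs | habs <;> rw [hT, habs]
  exacts [h, h.neg]

end SymplecticRotation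

section Hamiltonian

theorem grad4_H0fun (Δ : ℝ) (y : Fin 4 → ℝ) : grad4 (H0fun Δ) y = Smat Δ *ᵥ y := by
  have hH0 : H0fun Δ = fun x => ∑ i, ![-Δ, Δ, -Δ, Δ] i * x i ^ 2 := by
    funext x
    simp only [H0fun, Fin.sum_univ_four, cons_val_zero, cons_val_one, cons_val]
    ring
  rw [hH0, grad4_sum_mul_sq, Smat]
  congr 2
  funext i
  fin_cases i <;> simp

noncomputable def hamiltonian (Δ ε A N : ℝ) (y : Fin 4 → ℝ) : ℝ :=
  H0fun Δ y + H2fun ε A N y + H4fun A y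

variable {Δ ε A N : ℝ}

theorem differentiable_hamiltonian : Differentiable ℝ (hamiltonian Δ ε A N) := by
  unfold hamiltonian H0fun H2fun H4fun
  fun_prop

-- The hypotheses say that `x` and `y` have the same `|z₁|²`, `|z₃|²` and `Re (z₁ z₃)`.
theorem hamiltonian_eq_of_invariants_eq {x y : Fin 4 → ℝ}
    (h1 : x 0 ^ 2 + x 2 ^ 2 = y 0 ^ 2 + y 2 ^ 2) (h3 : x 1 ^ 2 + x 3 ^ 2 = y 1 ^ 2 + y 3 ^ 2)
    (h13 : x 0 * x 1 - x 2 * x 3 = y 0 * y 1 - y 2 * y 3) :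
    hamiltonian Δ ε A N x = hamiltonian Δ ε A N y := by
  simp only [hamiltonian, H0fun, H2fun, H4fun]
  rw [h1, h3, h13]
  linear_combination ε * h3

theorem hamiltonian_exp_smul_mulVec (hΔ : Δ ≠ 0) (θ : ℝ) (y : Fin 4 → ℝ) :
    hamiltonian Δ ε A N (exp (θ • (Jmat * Smat Δ)) *ᵥ y) = hamiltonian Δ ε A N y := by
  have hcs := Real.sin_sq_add_cos_sq (2 * Δ * θ)
  rw [exp_smul_Jmat_mul_Smat_mulVec hΔ]
  apply hamiltonian_eq_of_invariants_eq <;> simp only [cons_val_zero, cons_val_one, cons_val]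
  · linear_combination (y 0 ^ 2 + y 2 ^ 2) * hcs
  · linear_combination (y 1 ^ 2 + y 3 ^ 2) * hcs
  · linear_combination (y 0 * y 1 - y 2 * y 3) * hcs

theorem grad4_hamiltonian_exp_smul_mulVec (hΔ : Δ ≠ 0) (θ : ℝ) (y : Fin 4 → ℝ) :
    grad4 (hamiltonian Δ ε A N) (exp (θ • (Jmat * Smat Δ)) *ᵥ y) =
      exp (θ • (Jmat * Smat Δ)) *ᵥ grad4 (hamiltonian Δ ε A N) y := by
  refine grad4_mulVec_of_comp_eq differentiable_hamiltonian (hamiltonian_exp_smul_mulVec hΔ θ)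
    (exp_mul_transpose_of_transpose_eq_neg ?_) y
  rw [transpose_smul, Jmat_mul_Smat_transpose, smul_neg]

theorem Jmat_mulVec_grad4_hamiltonian_exp_smul_mulVec (hΔ : Δ ≠ 0) {η : ℝ} {y : Fin 4 → ℝ}
    (hcrit : grad4 (hamiltonian Δ ε A N) y = η • grad4 (H0fun Δ) y) (θ : ℝ) :
    Jmat *ᵥ grad4 (hamiltonian Δ ε A N) (exp (θ • (Jmat * Smat Δ)) *ᵥ y) =
      (η • (Jmat * Smat Δ)) *ᵥ (exp (θ • (Jmat * Smat Δ)) *ᵥ y) := by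
  set M := Jmat * Smat Δ
  set R := exp (θ • M)
  have hMR : Commute (η • M) R := ((Commute.refl M).smul_left η).smul_right θ |>.exp_right
  have hJR : Commute Jmat R :=
    ((Commute.refl Jmat).mul_right (commute_Jmat_Smat Δ)).smul_right θ |>.exp_right
  calc Jmat *ᵥ grad4 (hamiltonian Δ ε A N) (R *ᵥ y)
      = Jmat *ᵥ (R *ᵥ grad4 (hamiltonian Δ ε A N) y) := by
        rw [grad4_hamiltonian_exp_smul_mulVec hΔ]
    _ = R *ᵥ (Jmat *ᵥ grad4 (hamiltonian Δ ε A N) y) := by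
        rw [mulVec_mulVec, mulVec_mulVec, hJR.eq]
    _ = R *ᵥ (Jmat *ᵥ (η • (Smat Δ *ᵥ y))) := by rw [hcrit, grad4_H0fun]
    _ = (η • M) *ᵥ (R *ᵥ y) := by
        simp only [mulVec_mulVec, hMR.eq, Matrix.mul_smul, smul_mulVec, mulVec_smul]
        rfl

end Hamiltonian

/-- Chow–Kim: a constrained critical point `∇H(y*) = η ∇H₀(y*)` of the truncated
normal form `H = H₀ + H₂ + H₄` gives an exact solution `γ(t) = exp(ηtJS) y*` of
the Hamiltonian system `γ' = J ∇H(γ)`, periodic with period `π/(|η|Δ)` when `η ≠ 0`. -/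
theorem chow_kim_relative_periodic_orbit (Δ ε A N : ℝ) (hΔ : 0 < Δ)
    (ystar : Fin 4 → ℝ) (η : ℝ)
    (hcrit : grad4 (fun y => H0fun Δ y + H2fun ε A N y + H4fun A y) ystar
      = η • grad4 (H0fun Δ) ystar) :
    (∀ t : ℝ,
      HasDerivAt
        (fun s : ℝ => (NormedSpace.exp ((η * s) • (Jmat * Smat Δ))).mulVec ystar)
        (Jmat.mulVec (grad4 (fun y => H0fun Δ y + H2fun ε A N y + H4fun A y)
          ((NormedSpace.exp ((η * t) • (Jmat * Smat Δ))).mulVec ystar))) t) ∧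
    (η ≠ 0 →
      Function.Periodic
        (fun s : ℝ => (NormedSpace.exp ((η * s) • (Jmat * Smat Δ))).mulVec ystar)
        (Real.pi / (|η| * Δ))) := by
  change grad4 (hamiltonian Δ ε A N) ystar = _ at hcrit
  refine ⟨fun t => ?_, fun hη => periodic_exp_mul_smul_Jmat_mul_Smat_mulVec hΔ hη ystar⟩
  have hflow := hasDerivAt_exp_smul_mulVec (η • (Jmat * Smat Δ)) ystar t
  simp only [smul_smul, mul_comm _ η] at hflow
  exact hflow.congr_deriv
    (Jmat_mulVec_grad4_hamiltonian_exp_smul_mulVec hΔ.ne' hcrit (η * t)).symm
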